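/- There exists an absolute constant C > 0 such that for all real β with 0 < β ≤ 1, all real Δ ≥ 1, and all real x, one has 0 < m⁻_{β,Δ}(x) and m⁺_{β,Δ}(x) ≤ C/(β·(1 + x²)). -/

import Mathlib

open scoped Real

noncomputable def mPlus (β Δ x : ℝ) : ℝ :=
  (β / (β ^ 2 + x ^ 2)) *
    ((Real.exp (2 * π * β * Δ) + Real.exp (-(2 * π * β * Δ)) - 2 * Real.cos (2 * π * Δ * x)) /
      (Real.exp (π * β * Δ) - Real.exp (-(π * β * Δ))) ^ 2)

noncomputable def mMinus (β Δ x : ℝ) : ℝ :=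
  (β / (β ^ 2 + x ^ 2)) *
    ((Real.exp (2 * π * β * Δ) + Real.exp (-(2 * π * β * Δ)) - 2 * Real.cos (2 * π * Δ * x)) /
      (Real.exp (π * β * Δ) + Real.exp (-(π * β * Δ))) ^ 2)

/-! With `a = πβΔ`, the common numerator is `(2 sinh a)² + 2 (1 - cos 2πΔx)`, so
`m⁺ = β / (β² + x²) · (1 + 2 (1 - cos 2πΔx) / (2 sinh a)²)`. Since `β ≤ 1` the first term is at most
`1 / (β (1 + x²))`. In the correction, `sinh a ≥ a` controls the denominator, while
`1 - cos θ ≤ min (θ² / 2, 2)` gives decay in `x` uniformly in `Δ`; together they bound it by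
`2 x² / (β² (1 + x²))`, and `C = 3` works. -/

open Real

namespace Real

lemma exp_sub_exp_neg (a : ℝ) : exp a - exp (-a) = 2 * sinh a := by
  rw [sinh_eq]; ring

lemma exp_two_mul_add_exp_neg_sub_two_cos (a θ : ℝ) :
    exp (2 * a) + exp (-(2 * a)) - 2 * cos θ = (2 * sinh a) ^ 2 + 2 * (1 - cos θ) := by
  have h : exp (2 * a) + exp (-(2 * a)) = 2 * cosh (2 * a) := by rw [cosh_eq]; ring
  rw [h, cosh_two_mul, cosh_sq]
  ring

lemma sq_le_sinh_sq (a : ℝ) : a ^ 2 ≤ sinh a ^ 2 := by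
  have h : |a| ≤ |sinh a| := (abs_sinh a).symm ▸ self_le_sinh_iff.2 (abs_nonneg a)
  simpa only [sq_abs] using pow_le_pow_left₀ (abs_nonneg a) h 2

lemma one_sub_cos_mul_mul_one_add_sq_le {t : ℝ} (ht : 4 ≤ t ^ 2) (y : ℝ) :
    (1 - cos (t * y)) * (1 + y ^ 2) ≤ t ^ 2 * y ^ 2 := by
  have hnonneg : 0 ≤ 1 - cos (t * y) := sub_nonneg.2 (cos_le_one _)
  have hquad : 1 - cos (t * y) ≤ (t * y) ^ 2 / 2 := by
    linarith [one_sub_sq_div_two_le_cos (x := t * y)]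
  have htwo : 1 - cos (t * y) ≤ 2 := by linarith [neg_one_le_cos (t * y)]
  rcases le_total (y ^ 2) 1 with hy | hy
  · nlinarith
  · nlinarith

end Real

lemma mPlus_numerator_eq (β Δ x : ℝ) :
    exp (2 * π * β * Δ) + exp (-(2 * π * β * Δ)) - 2 * cos (2 * π * Δ * x) =
      (2 * sinh (π * β * Δ)) ^ 2 + 2 * (1 - cos (2 * π * Δ * x)) := by
  rw [← exp_two_mul_add_exp_neg_sub_two_cos]; ring_nf

lemma mPlus_eq {β Δ : ℝ} (hβ : β ≠ 0) (hΔ : Δ ≠ 0) (x : ℝ) :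
    mPlus β Δ x = β / (β ^ 2 + x ^ 2) *
      (1 + 2 * (1 - cos (2 * π * Δ * x)) / (2 * sinh (π * β * Δ)) ^ 2) := by
  have hs : sinh (π * β * Δ) ≠ 0 := sinh_ne_zero.2 (by positivity)
  rw [mPlus, mPlus_numerator_eq, exp_sub_exp_neg, add_div, div_self (by positivity)]

lemma mMinus_pos {β Δ : ℝ} (hβ : 0 < β) (hΔ : Δ ≠ 0) (x : ℝ) : 0 < mMinus β Δ x := by
  have hs : sinh (π * β * Δ) ≠ 0 := sinh_ne_zero.2 (by positivity)
  have hu : 0 ≤ 1 - cos (2 * π * Δ * x) := sub_nonneg.2 (cos_le_one _)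
  rw [mMinus, mPlus_numerator_eq]
  positivity

lemma two_mul_one_sub_cos_div_sinh_sq_le {β Δ : ℝ} (hβ : 0 < β) (hΔ : 1 ≤ Δ) (x : ℝ) :
    2 * (1 - cos (2 * π * Δ * x)) / (2 * sinh (π * β * Δ)) ^ 2 ≤
      2 * x ^ 2 / (β ^ 2 * (1 + x ^ 2)) := by
  have ht : 4 ≤ (2 * π * Δ) ^ 2 := by
    have h : 2 ≤ 2 * π * Δ := by nlinarith [pi_gt_three]
    nlinarith
  have hcos := one_sub_cos_mul_mul_one_add_sq_le ht x
  have hsinh := sq_le_sinh_sq (π * β * Δ)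
  rw [div_le_div_iff₀ (by positivity) (by positivity)]
  calc 2 * (1 - cos (2 * π * Δ * x)) * (β ^ 2 * (1 + x ^ 2))
      = 2 * β ^ 2 * ((1 - cos (2 * π * Δ * x)) * (1 + x ^ 2)) := by ring
    _ ≤ 2 * β ^ 2 * ((2 * π * Δ) ^ 2 * x ^ 2) := by gcongr
    _ = 8 * x ^ 2 * (π * β * Δ) ^ 2 := by ring
    _ ≤ 8 * x ^ 2 * sinh (π * β * Δ) ^ 2 := by gcongr
    _ = 2 * x ^ 2 * (2 * sinh (π * β * Δ)) ^ 2 := by ring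

lemma div_sq_add_sq_mul_one_add_le {β : ℝ} (hβ : 0 < β) (hβ1 : β ≤ 1) (x : ℝ) :
    β / (β ^ 2 + x ^ 2) * (1 + 2 * x ^ 2 / (β ^ 2 * (1 + x ^ 2))) ≤ 3 / (β * (1 + x ^ 2)) := by
  have key : β ^ 2 * (1 + x ^ 2) + 2 * x ^ 2 ≤ 3 * (β ^ 2 + x ^ 2) := by
    nlinarith [mul_le_mul_of_nonneg_right (pow_le_one₀ hβ.le hβ1 : β ^ 2 ≤ 1) (sq_nonneg x)]
  rw [one_add_div (by positivity), div_mul_div_comm,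
    div_le_div_iff₀ (by positivity) (by positivity)]
  calc β * (β ^ 2 * (1 + x ^ 2) + 2 * x ^ 2) * (β * (1 + x ^ 2))
      = β ^ 2 * (1 + x ^ 2) * (β ^ 2 * (1 + x ^ 2) + 2 * x ^ 2) := by ring
    _ ≤ β ^ 2 * (1 + x ^ 2) * (3 * (β ^ 2 + x ^ 2)) := by gcongr
    _ = 3 * ((β ^ 2 + x ^ 2) * (β ^ 2 * (1 + x ^ 2))) := by ring

theorem real_decay_bounds :
    ∃ C : ℝ, 0 < C ∧ ∀ β Δ x : ℝ, 0 < β → β ≤ 1 → 1 ≤ Δ →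
      0 < mMinus β Δ x ∧ mPlus β Δ x ≤ C / (β * (1 + x ^ 2)) := by
  refine ⟨3, by norm_num, fun β Δ x hβ hβ1 hΔ => ⟨mMinus_pos hβ (by positivity) x, ?_⟩⟩
  rw [mPlus_eq hβ.ne' (by positivity)]
  calc β / (β ^ 2 + x ^ 2) * (1 + 2 * (1 - cos (2 * π * Δ * x)) / (2 * sinh (π * β * Δ)) ^ 2)
      ≤ β / (β ^ 2 + x ^ 2) * (1 + 2 * x ^ 2 / (β ^ 2 * (1 + x ^ 2))) := by
        gcongr _ * (1 + ?_)
        exact two_mul_one_sub_cos_div_sinh_sq_le hβ hΔ x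
    _ ≤ 3 / (β * (1 + x ^ 2)) := div_sq_add_sq_mul_one_add_le hβ hβ1 x
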